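/- arXiv:1906.08135 — 5 statements merged into one kernel-verified Lean document; each statement's English description precedes it below -/
import Mathlib

section
/- Let R ∈ ℝ^{n×m} be any real matrix, let f₁, …, f_m : ℝ → ℝ be strictly increasing, and write f(q) = (f₁(q₁), …, f_m(q_m)). If q₁, q₂ ∈ ℝ^m satisfy R q₁ = R q₂ and both f(q₁) and f(q₂) belong to Im(Rᵀ), then q₁ = q₂. In particular, for the steam-network equilibrium conditions R q = s and f(q) ∈ Im(Rᵀ), the flow vector q is unique whenever it exists. -/
open Matrix

/-- Uniqueness of the equilibrium flow: if `R q₁ = R q₂` and both `f(q₁)` and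
`f(q₂)` belong to `Im(Rᵀ)`, where `f` acts componentwise by strictly increasing
functions, then `q₁ = q₂`. -/
theorem equilibrium_flow_unique {n m : ℕ} (R : Matrix (Fin n) (Fin m) ℝ)
    (f : Fin m → ℝ → ℝ) (hf : ∀ l, StrictMono (f l))
    (q₁ q₂ : Fin m → ℝ)
    (hq : R.mulVec q₁ = R.mulVec q₂)
    (h₁ : (fun l => f l (q₁ l)) ∈ LinearMap.range R.transpose.mulVecLin)
    (h₂ : (fun l => f l (q₂ l)) ∈ LinearMap.range R.transpose.mulVecLin) :
    q₁ = q₂ := by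
  obtain ⟨p₁, hp₁⟩ := h₁
  obtain ⟨p₂, hp₂⟩ := h₂
  simp only [mulVecLin_apply] at hp₁ hp₂
  have hker : R.mulVec (q₁ - q₂) = 0 := by
    rw [mulVec_sub, hq, sub_self]
  have key : ∑ l, (q₁ l - q₂ l) * (f l (q₁ l) - f l (q₂ l)) = 0 := by
    have : ∑ l, (q₁ l - q₂ l) * (f l (q₁ l) - f l (q₂ l))
        = (q₁ - q₂) ⬝ᵥ (Rᵀ *ᵥ (p₁ - p₂)) := by
      rw [mulVec_sub, hp₁, hp₂]
      simp [dotProduct, Pi.sub_apply]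
    rw [this, dotProduct_mulVec, vecMul_transpose, hker, zero_dotProduct]
  have hnonneg : ∀ l ∈ Finset.univ,
      0 ≤ (q₁ l - q₂ l) * (f l (q₁ l) - f l (q₂ l)) := by
    intro l _
    rcases lt_trichotomy (q₁ l) (q₂ l) with h | h | h
    · nlinarith [hf l h]
    · simp [h]
    · exact mul_nonneg (by linarith) (by linarith [hf l h])
  have hall := (Finset.sum_eq_zero_iff_of_nonneg hnonneg).mp key
  funext l
  have := hall l (Finset.mem_univ l)
  by_contra hne
  rcases lt_or_gt_of_ne hne with h | h
  · nlinarith [hf l h]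
  · nlinarith [hf l h]
end

section
/- Let R ∈ ℝ^{n×m} be the incidence matrix of a connected directed graph with n vertices and m links and no self-loops, let f : ℝ^m → ℝ^m act componentwise by strictly increasing functions, and let s ∈ ℝⁿ. Suppose (ψ₀, q₀) ∈ ℝⁿ × ℝ^m satisfies the equilibrium conditions R q₀ = s and Rᵀ ψ₀ = f(q₀). Then the set of all equilibrium points {(ψ, q) ∈ ℝⁿ × ℝ^m : R q = s and Rᵀ ψ = f(q)} equals the one-dimensional line {(ψ₀ + c𝟙, q₀) : c ∈ ℝ}. -/
open Matrix

/-- `R` is the incidence matrix of a directed graph with no self-loops. -/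
def IsIncidence {n m : ℕ} (R : Matrix (Fin n) (Fin m) ℝ) : Prop :=
  ∀ j : Fin m, ∃ a b : Fin n, a ≠ b ∧ R a j = 1 ∧ R b j = -1 ∧
    ∀ i : Fin n, i ≠ a → i ≠ b → R i j = 0

/-- The simple graph on the vertices in which `a` and `b` are adjacent whenever
some link has `(a, b)` as its tail–head pair. -/
def IncidenceGraph {n m : ℕ} (R : Matrix (Fin n) (Fin m) ℝ) : SimpleGraph (Fin n) :=
  SimpleGraph.fromRel (fun a b => ∃ j : Fin m, R a j = 1 ∧ R b j = -1)

private lemma transpose_mulVec_entry {n m : ℕ} {R : Matrix (Fin n) (Fin m) ℝ}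
    (hR : IsIncidence R) (v : Fin n → ℝ) (j : Fin m) {a b : Fin n}
    (ha : R a j = 1) (hb : R b j = -1) :
    R.transpose.mulVec v j = v a - v b := by
  obtain ⟨a', b', hab, ha', hb', h0⟩ := hR j
  have haa : a = a' := by
    by_contra h
    rcases eq_or_ne a b' with h2 | h2
    · rw [h2, hb'] at ha; norm_num at ha
    · rw [h0 a h h2] at ha; norm_num at ha
  have hbb : b = b' := by
    by_contra h
    rcases eq_or_ne b a' with h2 | h2
    · rw [h2, ha'] at hb; norm_num at hb
    · rw [h0 b h2 h] at hb; norm_num at hb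
  subst haa; subst hbb
  have hs : R.transpose.mulVec v j = ∑ i, R i j * v i := by
    simp [Matrix.mulVec, dotProduct]
  rw [hs, Finset.sum_eq_add_of_mem a b (Finset.mem_univ a) (Finset.mem_univ b) hab
    (fun c _ hc => by rw [h0 c hc.1 hc.2]; ring)]
  rw [ha, hb]; ring

private lemma transpose_mulVec_const {n m : ℕ} {R : Matrix (Fin n) (Fin m) ℝ}
    (hR : IsIncidence R) (c : ℝ) :
    R.transpose.mulVec (fun _ => c) = 0 := by
  funext j
  obtain ⟨a, b, hab, ha, hb, h0⟩ := hR j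
  rw [transpose_mulVec_entry hR _ j ha hb]
  simp

/-- If `(ψ₀, q₀)` is an equilibrium (`R q₀ = s`, `Rᵀ ψ₀ = f(q₀)`, with `f`
acting componentwise by strictly increasing functions `g l`), then the set of
all equilibria is the one-dimensional line `{(ψ₀ + c𝟙, q₀) : c ∈ ℝ}`. -/
theorem equilibrium_set_eq_line {n m : ℕ} (R : Matrix (Fin n) (Fin m) ℝ)
    (hR : IsIncidence R) (hconn : (IncidenceGraph R).Connected)
    (g : Fin m → ℝ → ℝ) (hg : ∀ l, StrictMono (g l))
    (s : Fin n → ℝ) (ψ₀ : Fin n → ℝ) (q₀ : Fin m → ℝ)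
    (h₁ : R.mulVec q₀ = s)
    (h₂ : R.transpose.mulVec ψ₀ = fun l => g l (q₀ l)) :
    {p : (Fin n → ℝ) × (Fin m → ℝ) |
        R.mulVec p.2 = s ∧ R.transpose.mulVec p.1 = fun l => g l (p.2 l)}
      = {p : (Fin n → ℝ) × (Fin m → ℝ) |
          ∃ c : ℝ, p = (ψ₀ + fun _ => c, q₀)} := by
  ext p
  obtain ⟨ψ, q⟩ := p
  simp only [Set.mem_setOf_eq]
  constructor
  · rintro ⟨hq, hψ⟩
    -- first show q = q₀
    have hker : R.mulVec (q - q₀) = 0 := by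
      rw [Matrix.mulVec_sub, hq, h₁, sub_self]
    have hpair : (R.transpose.mulVec (ψ - ψ₀)) ⬝ᵥ (q - q₀) = 0 := by
      rw [Matrix.mulVec_transpose, ← Matrix.dotProduct_mulVec, hker,
        dotProduct_zero]
    have hsum : ∑ l, (g l (q l) - g l (q₀ l)) * (q l - q₀ l) = 0 := by
      have : R.transpose.mulVec (ψ - ψ₀)
          = fun l => g l (q l) - g l (q₀ l) := by
        rw [Matrix.mulVec_sub, hψ, h₂]
        rfl
      rw [this] at hpair
      simpa [dotProduct] using hpair
    have hnonneg : ∀ l : Fin m, 0 ≤ (g l (q l) - g l (q₀ l)) * (q l - q₀ l) := by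
      intro l
      rcases lt_trichotomy (q l) (q₀ l) with h | h | h
      · have h1 := (hg l) h
        nlinarith
      · rw [h]; simp
      · have h1 := (hg l) h
        nlinarith
    have hqq : q = q₀ := by
      funext l
      have := (Finset.sum_eq_zero_iff_of_nonneg
        (fun l _ => hnonneg l)).mp hsum l (Finset.mem_univ l)
      by_contra hne
      rcases lt_or_gt_of_ne hne with h | h
      · have h1 := (hg l) h
        nlinarith
      · have h1 := (hg l) h
        nlinarith
    subst hqq
    -- now Rᵀ (ψ - ψ₀) = 0
    have hzero : R.transpose.mulVec (ψ - ψ₀) = 0 := by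
      rw [Matrix.mulVec_sub, hψ, h₂, sub_self]
    -- adjacent vertices have equal difference
    have hadj : ∀ a b : Fin n, (IncidenceGraph R).Adj a b →
        ψ a - ψ₀ a = ψ b - ψ₀ b := by
      intro a b hab
      obtain ⟨hne, h | h⟩ := hab
      · obtain ⟨j, ha, hb⟩ := h
        have := transpose_mulVec_entry hR (ψ - ψ₀) j ha hb
        rw [hzero] at this
        have h0 : (0 : Fin m → ℝ) j = 0 := rfl
        rw [h0] at this
        simp only [Pi.sub_apply] at this
        linarith
      · obtain ⟨j, hb, ha⟩ := h
        have := transpose_mulVec_entry hR (ψ - ψ₀) j hb ha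
        rw [hzero] at this
        have h0 : (0 : Fin m → ℝ) j = 0 := rfl
        rw [h0] at this
        simp only [Pi.sub_apply] at this
        linarith
    have hreach : ∀ a b : Fin n, (IncidenceGraph R).Reachable a b →
        ψ a - ψ₀ a = ψ b - ψ₀ b := by
      intro a b h
      obtain ⟨w⟩ := h
      induction w with
      | nil => rfl
      | cons h w ih => exact (hadj _ _ h).trans ih
    obtain ⟨i₀⟩ := hconn.nonempty
    refine ⟨ψ i₀ - ψ₀ i₀, ?_⟩
    have hψeq : ψ = ψ₀ + fun _ => ψ i₀ - ψ₀ i₀ := by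
      funext i
      have := hreach i i₀ (hconn.preconnected i i₀)
      simp only [Pi.add_apply]
      linarith
    simp only [Prod.mk.injEq]
    exact ⟨hψeq, trivial⟩
  · rintro ⟨c, hp⟩
    obtain ⟨h1, h2⟩ := Prod.mk.injEq .. ▸ hp
    subst h1; subst h2
    refine ⟨h₁, ?_⟩
    rw [Matrix.mulVec_add, h₂, transpose_mulVec_const hR, add_zero]
end

section
/- Let R ∈ ℝ^{n×m} be the incidence matrix of a connected directed graph with n vertices and m links and no self-loops, and let G ∈ ℝ^{n×n}, H ∈ ℝ^{m×m}, D ∈ ℝ^{m×m} be diagonal matrices with strictly positive diagonal entries. Define the block matrix A = [[0, −G⁻¹R], [H⁻¹Rᵀ, −H⁻¹D]] ∈ ℝ^{(n+m)×(n+m)}. Then Ker(A) = {(c𝟙, 0) : c ∈ ℝ}; in particular, the eigenvalue 0 of A has geometric multiplicity one with eigenvector (𝟙, 0). -/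
open Matrix

/-- Column sums of an incidence matrix vanish against any vector supported on the
two endpoints: `∑ i, R i j * ψ i = ψ a - ψ b`. -/
lemma incidence_col_sum {n m : ℕ} {R : Matrix (Fin n) (Fin m) ℝ}
    {j : Fin m} {a b : Fin n} (hne : a ≠ b) (ha : R a j = 1) (hb : R b j = -1)
    (hz : ∀ i : Fin n, i ≠ a → i ≠ b → R i j = 0) (ψ : Fin n → ℝ) :
    ∑ i, R i j * ψ i = ψ a - ψ b := by
  rw [Finset.sum_eq_add a b hne
    (fun c _ hc => by rw [hz c hc.1 hc.2]; ring)
    (fun hc => absurd (Finset.mem_univ a) hc)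
    (fun hc => absurd (Finset.mem_univ b) hc), ha, hb]
  ring

/-- The kernel of the linearization `A = [[0, −G⁻¹R], [H⁻¹Rᵀ, −H⁻¹D]]`
is exactly `{(c𝟙, 0) : c ∈ ℝ}`. -/
theorem ker_linearization_eq_span {n m : ℕ} (R : Matrix (Fin n) (Fin m) ℝ)
    (hR : IsIncidence R) (hconn : (IncidenceGraph R).Connected)
    (g : Fin n → ℝ) (h : Fin m → ℝ) (d : Fin m → ℝ)
    (hg : ∀ i, 0 < g i) (hh : ∀ l, 0 < h l) (hd : ∀ l, 0 < d l)
    (A : Matrix (Fin n ⊕ Fin m) (Fin n ⊕ Fin m) ℝ)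
    (hA : A = Matrix.fromBlocks (0 : Matrix (Fin n) (Fin n) ℝ)
        (-((Matrix.diagonal g)⁻¹ * R))
        ((Matrix.diagonal h)⁻¹ * R.transpose)
        (-((Matrix.diagonal h)⁻¹ * Matrix.diagonal d))) :
    LinearMap.ker A.mulVecLin
      = Submodule.span ℝ
          {(Sum.elim (fun _ => (1 : ℝ)) (fun _ => (0 : ℝ)) : Fin n ⊕ Fin m → ℝ)} := by
  subst hA
  have hgdet : IsUnit (Matrix.diagonal g).det := by
    rw [Matrix.det_diagonal]
    exact isUnit_iff_ne_zero.2 (ne_of_gt (Finset.prod_pos (fun i _ => hg i)))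
  have hhdet : IsUnit (Matrix.diagonal h).det := by
    rw [Matrix.det_diagonal]
    exact isUnit_iff_ne_zero.2 (ne_of_gt (Finset.prod_pos (fun l _ => hh l)))
  -- Rᵀ *ᵥ 𝟙 = 0
  have hRt1 : R.transpose *ᵥ (fun _ => (1 : ℝ)) = 0 := by
    funext j
    obtain ⟨a, b, hne, ha, hb, hz⟩ := hR j
    have : ∑ i, R i j * (1 : ℝ) = (1 : ℝ) - 1 :=
      incidence_col_sum hne ha hb hz (fun _ => 1)
    simpa [Matrix.mulVec, dotProduct, Matrix.transpose_apply] using this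
  ext x
  simp only [LinearMap.mem_ker, Matrix.mulVecLin_apply, Submodule.mem_span_singleton]
  constructor
  · intro hx
    rw [Matrix.fromBlocks_mulVec] at hx
    set ψ : Fin n → ℝ := x ∘ Sum.inl with hψ
    set q : Fin m → ℝ := x ∘ Sum.inr with hq
    -- first block row: (G⁻¹ R) q = 0
    have h1 : ((Matrix.diagonal g)⁻¹ * R) *ᵥ q = 0 := by
      funext i
      have := congrFun hx (Sum.inl i)
      simp only [Sum.elim_inl, Matrix.zero_mulVec, Matrix.neg_mulVec, Pi.add_apply,
        Pi.zero_apply, Pi.neg_apply, zero_add] at this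
      simp only [Pi.zero_apply]
      linarith
    have hRq : R *ᵥ q = 0 := by
      calc R *ᵥ q
          = (Matrix.diagonal g * ((Matrix.diagonal g)⁻¹ * R)) *ᵥ q := by
            rw [← Matrix.mul_assoc, Matrix.mul_nonsing_inv _ hgdet, Matrix.one_mul]
        _ = Matrix.diagonal g *ᵥ (((Matrix.diagonal g)⁻¹ * R) *ᵥ q) := by
            rw [Matrix.mulVec_mulVec]
        _ = 0 := by rw [h1, Matrix.mulVec_zero]
    -- second block row: H⁻¹ Rᵀ ψ = H⁻¹ D q
    have h2 : ((Matrix.diagonal h)⁻¹ * R.transpose) *ᵥ ψ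
        = ((Matrix.diagonal h)⁻¹ * Matrix.diagonal d) *ᵥ q := by
      funext l
      have := congrFun hx (Sum.inr l)
      simp only [Sum.elim_inr, Matrix.neg_mulVec, Pi.add_apply, Pi.neg_apply,
        Pi.zero_apply] at this
      linarith
    have hRtψ : R.transpose *ᵥ ψ = Matrix.diagonal d *ᵥ q := by
      calc R.transpose *ᵥ ψ
          = (Matrix.diagonal h * ((Matrix.diagonal h)⁻¹ * R.transpose)) *ᵥ ψ := by
            rw [← Matrix.mul_assoc, Matrix.mul_nonsing_inv _ hhdet, Matrix.one_mul]
        _ = Matrix.diagonal h *ᵥ (((Matrix.diagonal h)⁻¹ * R.transpose) *ᵥ ψ) := by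
            rw [Matrix.mulVec_mulVec]
        _ = Matrix.diagonal h *ᵥ (((Matrix.diagonal h)⁻¹ * Matrix.diagonal d) *ᵥ q) := by
            rw [h2]
        _ = (Matrix.diagonal h * ((Matrix.diagonal h)⁻¹ * Matrix.diagonal d)) *ᵥ q := by
            rw [Matrix.mulVec_mulVec]
        _ = Matrix.diagonal d *ᵥ q := by
            rw [← Matrix.mul_assoc, Matrix.mul_nonsing_inv _ hhdet, Matrix.one_mul]
    -- q = 0
    have key : q ⬝ᵥ (Matrix.diagonal d *ᵥ q) = 0 := by
      rw [← hRtψ, Matrix.dotProduct_mulVec, Matrix.vecMul_transpose, hRq,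
        zero_dotProduct]
    have hsum : ∑ l, d l * q l ^ 2 = 0 := by
      have : ∑ l, q l * (d l * q l) = 0 := by
        simpa [dotProduct, Matrix.mulVec_diagonal] using key
      rw [← this]
      exact Finset.sum_congr rfl (fun l _ => by ring)
    have hq0 : ∀ l, q l = 0 := by
      intro l
      have := (Finset.sum_eq_zero_iff_of_nonneg
        (fun l _ => mul_nonneg (hd l).le (sq_nonneg (q l)))).1 hsum l (Finset.mem_univ l)
      have : q l ^ 2 = 0 := by
        rcases mul_eq_zero.1 this with h' | h'
        · exact absurd h' (ne_of_gt (hd l))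
        · exact h'
      exact pow_eq_zero_iff (by norm_num) |>.1 this
    have hqz : q = 0 := funext hq0
    have hRtψ0 : R.transpose *ᵥ ψ = 0 := by rw [hRtψ, hqz, Matrix.mulVec_zero]
    -- ψ is constant along edges
    have ident : ∀ (j : Fin m) (a b : Fin n), R a j = 1 → R b j = -1 → ψ a = ψ b := by
      intro j a b ha hb
      obtain ⟨a', b', hne', ha', hb', hz⟩ := hR j
      have haa : a = a' := by
        by_contra hne2
        rcases eq_or_ne a b' with rfl | hne3
        · rw [hb'] at ha; norm_num at ha
        · rw [hz a hne2 hne3] at ha; norm_num at ha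
      have hbb : b = b' := by
        by_contra hne2
        rcases eq_or_ne b a' with rfl | hne3
        · rw [ha'] at hb; norm_num at hb
        · rw [hz b hne3 hne2] at hb; norm_num at hb
      subst haa; subst hbb
      have hs : (R.transpose *ᵥ ψ) j = ψ a - ψ b := by
        simpa [Matrix.mulVec, dotProduct, Matrix.transpose_apply] using
          incidence_col_sum hne' ha' hb' hz ψ
      have := congrFun hRtψ0 j
      rw [hs] at this
      have : ψ a - ψ b = 0 := this
      linarith
    have edge : ∀ a b : Fin n, (IncidenceGraph R).Adj a b → ψ a = ψ b := by
      intro a b hab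
      rw [IncidenceGraph, SimpleGraph.fromRel_adj] at hab
      obtain ⟨-, ⟨j, h1, h2⟩ | ⟨j, h1, h2⟩⟩ := hab
      · exact ident j a b h1 h2
      · exact (ident j b a h1 h2).symm
    obtain ⟨v0⟩ := hconn.nonempty
    have hconst : ∀ i : Fin n, ψ i = ψ v0 := by
      intro i
      obtain ⟨w⟩ := hconn.preconnected i v0
      induction w with
      | nil => rfl
      | cons hadj p ih => exact (edge _ _ hadj).trans ih
    refine ⟨ψ v0, ?_⟩
    funext z
    cases z with
    | inl i =>
      simp only [Pi.smul_apply, Sum.elim_inl, smul_eq_mul, mul_one]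
      exact (hconst i).symm
    | inr l =>
      simp only [Pi.smul_apply, Sum.elim_inr, smul_eq_mul, mul_zero]
      exact (hq0 l).symm
  · rintro ⟨c, rfl⟩
    rw [Matrix.mulVec_smul]
    have : Matrix.fromBlocks (0 : Matrix (Fin n) (Fin n) ℝ)
        (-((Matrix.diagonal g)⁻¹ * R))
        ((Matrix.diagonal h)⁻¹ * R.transpose)
        (-((Matrix.diagonal h)⁻¹ * Matrix.diagonal d)) *ᵥ
        (Sum.elim (fun _ => (1 : ℝ)) (fun _ => (0 : ℝ))) = 0 := by
      rw [Matrix.fromBlocks_mulVec]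
      have hl : (Sum.elim (fun _ => (1 : ℝ)) (fun _ => (0 : ℝ)) : Fin n ⊕ Fin m → ℝ)
          ∘ Sum.inl = fun _ => (1 : ℝ) := rfl
      have hr : (Sum.elim (fun _ => (1 : ℝ)) (fun _ => (0 : ℝ)) : Fin n ⊕ Fin m → ℝ)
          ∘ Sum.inr = 0 := rfl
      rw [hl, hr]
      rw [← Matrix.mulVec_mulVec, hRt1, Matrix.mulVec_zero]
      simp [Matrix.zero_mulVec, Matrix.mulVec_zero]
    rw [this, smul_zero]
end

section
/- Let R ∈ ℝ^{n×m} be the incidence matrix of a connected directed graph with n vertices and m links and no self-loops, and let G ∈ ℝ^{n×n}, H ∈ ℝ^{m×m}, D ∈ ℝ^{m×m} be diagonal matrices with strictly positive diagonal entries, and A = [[0, −G⁻¹R], [H⁻¹Rᵀ, −H⁻¹D]]. Then Ker(A²) = Ker(A); i.e., A has no generalized eigenvector of rank two associated with the eigenvalue 0. -/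
open Matrix

/-- Column structure: if `R a j = 1` and `R b j = -1` then `(Rᵀ w) j = w a - w b`. -/
lemma incidence_col_apply {n m : ℕ} {R : Matrix (Fin n) (Fin m) ℝ} (hR : IsIncidence R)
    (j : Fin m) (a b : Fin n) (hab : a ≠ b) (ha : R a j = 1) (hb : R b j = -1)
    (w : Fin n → ℝ) : (R.transpose *ᵥ w) j = w a - w b := by
  obtain ⟨a', b', hab', ha', hb', hz⟩ := hR j
  have haa : a = a' := by
    by_contra hne
    rcases eq_or_ne a b' with rfl | hne2
    · rw [hb'] at ha; norm_num at ha
    · rw [hz a hne hne2] at ha; norm_num at ha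
  have hbb : b = b' := by
    by_contra hne
    rcases eq_or_ne b a' with rfl | hne2
    · rw [ha'] at hb; norm_num at hb
    · rw [hz b hne2 hne] at hb; norm_num at hb
  subst haa; subst hbb
  have key : ∀ i : Fin n, R i j * w i =
      (if i = a then w a else 0) + (if i = b then -(w b) else 0) := by
    intro i
    rcases eq_or_ne i a with rfl | hia
    · simp [ha, hab]
    · rcases eq_or_ne i b with rfl | hib
      · simp [hb, hia]
      · simp [hz i hia hib, hia, hib]
  calc (R.transpose *ᵥ w) j = ∑ i, R i j * w i := by
        simp [Matrix.mulVec, dotProduct, Matrix.transpose_apply]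
    _ = ∑ i, ((if i = a then w a else 0) + (if i = b then -(w b) else 0)) :=
        Finset.sum_congr rfl fun i _ => key i
    _ = w a - w b := by
        rw [Finset.sum_add_distrib, Finset.sum_ite_eq', Finset.sum_ite_eq']
        simp [sub_eq_add_neg]

/-- Columns of an incidence matrix sum to zero. -/
lemma incidence_col_sum_s11 {n m : ℕ} {R : Matrix (Fin n) (Fin m) ℝ} (hR : IsIncidence R)
    (j : Fin m) : ∑ i, R i j = 0 := by
  obtain ⟨a, b, hab, ha, hb, hz⟩ := hR j
  have key : ∀ i : Fin n, R i j =
      (if i = a then (1 : ℝ) else 0) + (if i = b then -1 else 0) := by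
    intro i
    rcases eq_or_ne i a with rfl | hia
    · simp [ha, hab]
    · rcases eq_or_ne i b with rfl | hib
      · simp [hb, hia]
      · simp [hz i hia hib, hia, hib]
  calc ∑ i, R i j = ∑ i, ((if i = a then (1 : ℝ) else 0) + (if i = b then -1 else 0)) :=
        Finset.sum_congr rfl fun i _ => key i
    _ = 0 := by
        rw [Finset.sum_add_distrib, Finset.sum_ite_eq', Finset.sum_ite_eq']
        simp

/-- `Ker(A²) = Ker(A)` for the linearization `A = [[0, −G⁻¹R], [H⁻¹Rᵀ, −H⁻¹D]]`:
there is no generalized eigenvector of rank two for the eigenvalue `0`. -/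
theorem ker_sq_eq_ker_linearization {n m : ℕ} (R : Matrix (Fin n) (Fin m) ℝ)
    (hR : IsIncidence R) (hconn : (IncidenceGraph R).Connected)
    (g : Fin n → ℝ) (h : Fin m → ℝ) (d : Fin m → ℝ)
    (hg : ∀ i, 0 < g i) (hh : ∀ l, 0 < h l) (hd : ∀ l, 0 < d l)
    (A : Matrix (Fin n ⊕ Fin m) (Fin n ⊕ Fin m) ℝ)
    (hA : A = Matrix.fromBlocks (0 : Matrix (Fin n) (Fin n) ℝ)
        (-((Matrix.diagonal g)⁻¹ * R))
        ((Matrix.diagonal h)⁻¹ * R.transpose)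
        (-((Matrix.diagonal h)⁻¹ * Matrix.diagonal d))) :
    LinearMap.ker (A ^ 2).mulVecLin = LinearMap.ker A.mulVecLin := by
  have hGinv : (Matrix.diagonal g)⁻¹ = Matrix.diagonal (fun i => (g i)⁻¹) := by
    refine Matrix.inv_eq_left_inv ?_
    rw [Matrix.diagonal_mul_diagonal]
    have h1 : (fun i => (g i)⁻¹ * g i) = fun _ => (1 : ℝ) :=
      funext fun i => inv_mul_cancel₀ (hg i).ne'
    rw [h1, Matrix.diagonal_one]
  have hHinv : (Matrix.diagonal h)⁻¹ = Matrix.diagonal (fun l => (h l)⁻¹) := by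
    refine Matrix.inv_eq_left_inv ?_
    rw [Matrix.diagonal_mul_diagonal]
    have h1 : (fun l => (h l)⁻¹ * h l) = fun _ => (1 : ℝ) :=
      funext fun l => inv_mul_cancel₀ (hh l).ne'
    rw [h1, Matrix.diagonal_one]
  have hform : ∀ (p : Fin n → ℝ) (r : Fin m → ℝ),
      A *ᵥ (Sum.elim p r)
      = Sum.elim (fun i => -((g i)⁻¹ * (R *ᵥ r) i))
          (fun l => (h l)⁻¹ * ((R.transpose *ᵥ p) l - d l * r l)) := by
    intro p r
    rw [hA, Matrix.fromBlocks_mulVec, hGinv, hHinv]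
    funext z
    cases z with
    | inl i =>
      simp [Matrix.neg_mulVec, ← Matrix.mulVec_mulVec, Matrix.mulVec_diagonal]
    | inr l =>
      simp only [Sum.elim_inr, Sum.elim_comp_inl, Sum.elim_comp_inr, Pi.add_apply,
        Matrix.neg_mulVec, ← Matrix.mulVec_mulVec, Matrix.mulVec_diagonal,
        Pi.neg_apply]
      ring
  ext x
  simp only [LinearMap.mem_ker, Matrix.mulVecLin_apply, pow_two, ← Matrix.mulVec_mulVec]
  constructor
  · intro hx2
    set ψ : Fin n → ℝ := x ∘ Sum.inl with hψ
    set q : Fin m → ℝ := x ∘ Sum.inr with hq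
    have hx : x = Sum.elim ψ q := (Sum.elim_comp_inl_inr x).symm
    set u : Fin n → ℝ := fun i => -((g i)⁻¹ * (R *ᵥ q) i) with hu
    set v : Fin m → ℝ := fun l => (h l)⁻¹ * ((R.transpose *ᵥ ψ) l - d l * q l) with hv
    have hAx : A *ᵥ x = Sum.elim u v := by rw [hx, hform]
    rw [hAx, hform] at hx2
    have hRv : ∀ i, (R *ᵥ v) i = 0 := by
      intro i
      have h0 := congrFun hx2 (Sum.inl i)
      simp only [Sum.elim_inl, Pi.zero_apply, neg_eq_zero] at h0
      rcases mul_eq_zero.mp h0 with h1 | h1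
      · exact absurd h1 (inv_ne_zero (hg i).ne')
      · exact h1
    have hRu : ∀ l, (R.transpose *ᵥ u) l = d l * v l := by
      intro l
      have h0 := congrFun hx2 (Sum.inr l)
      simp only [Sum.elim_inr, Pi.zero_apply] at h0
      rcases mul_eq_zero.mp h0 with h1 | h1
      · exact absurd h1 (inv_ne_zero (hh l).ne')
      · exact sub_eq_zero.mp h1
    -- v = 0
    have hsum : ∑ l, d l * (v l * v l) = 0 := by
      have : ∑ l, d l * (v l * v l) = ∑ l, (R.transpose *ᵥ u) l * v l :=
        Finset.sum_congr rfl fun l _ => by rw [hRu l]; ring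
      rw [this]
      have hdp : (R.transpose *ᵥ u) ⬝ᵥ v = u ⬝ᵥ (R *ᵥ v) := by
        rw [Matrix.mulVec_transpose, ← Matrix.dotProduct_mulVec]
      have hRv0 : R *ᵥ v = 0 := funext hRv
      calc ∑ l, (R.transpose *ᵥ u) l * v l = (R.transpose *ᵥ u) ⬝ᵥ v := rfl
        _ = u ⬝ᵥ (R *ᵥ v) := hdp
        _ = 0 := by rw [hRv0, dotProduct_zero]
    have hv0 : ∀ l, v l = 0 := by
      intro l
      have hl := (Finset.sum_eq_zero_iff_of_nonneg
        (fun l _ => mul_nonneg (hd l).le (mul_self_nonneg (v l)))).mp hsum l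
        (Finset.mem_univ l)
      exact mul_self_eq_zero.mp ((mul_eq_zero.mp hl).resolve_left (hd l).ne')
    have hRu0 : ∀ l, (R.transpose *ᵥ u) l = 0 := fun l => by rw [hRu l, hv0 l, mul_zero]
    -- u is constant
    have hadj : ∀ a b : Fin n, (IncidenceGraph R).Adj a b → u a = u b := by
      intro a b hab
      rw [IncidenceGraph, SimpleGraph.fromRel_adj] at hab
      obtain ⟨hne, ⟨j, h1, h2⟩ | ⟨j, h1, h2⟩⟩ := hab
      · have := incidence_col_apply hR j a b hne h1 h2 u
        rw [hRu0 j] at this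
        exact sub_eq_zero.mp this.symm
      · have := incidence_col_apply hR j b a hne.symm h1 h2 u
        rw [hRu0 j] at this
        exact (sub_eq_zero.mp this.symm).symm
    have hconst : ∀ a b : Fin n, u a = u b := by
      intro a b
      obtain ⟨w⟩ := hconn.preconnected a b
      induction w with
      | nil => rfl
      | cons h' p ih => exact (hadj _ _ h').trans ih
    obtain ⟨i0⟩ : Nonempty (Fin n) := hconn.nonempty
    have hsumg : ∑ i, g i * u i = 0 := by
      have h1 : ∀ i, g i * u i = -((R *ᵥ q) i) := by
        intro i
        rw [hu]
        rw [mul_neg, ← mul_assoc, mul_inv_cancel₀ (hg i).ne', one_mul]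
      calc ∑ i, g i * u i = ∑ i, -((R *ᵥ q) i) := Finset.sum_congr rfl fun i _ => h1 i
        _ = -(∑ i, (R *ᵥ q) i) := by rw [Finset.sum_neg_distrib]
        _ = 0 := by
            have : ∑ i, (R *ᵥ q) i = 0 := by
              simp only [Matrix.mulVec, dotProduct]
              rw [Finset.sum_comm]
              refine Finset.sum_eq_zero fun j _ => ?_
              rw [← Finset.sum_mul, incidence_col_sum_s11 hR j, zero_mul]
            rw [this, neg_zero]
    have hu0 : u i0 = 0 := by
      have h' : (∑ i, g i) * u i0 = 0 := by
        rw [Finset.sum_mul]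
        calc ∑ i, g i * u i0 = ∑ i, g i * u i :=
              Finset.sum_congr rfl fun i _ => by rw [hconst i0 i]
          _ = 0 := hsumg
      have hpos : 0 < ∑ i, g i := Finset.sum_pos (fun i _ => hg i) ⟨i0, Finset.mem_univ i0⟩
      exact (mul_eq_zero.mp h').resolve_left hpos.ne'
    have huz : ∀ i, u i = 0 := fun i => (hconst i i0).trans hu0
    rw [hAx]
    funext z
    cases z with
    | inl i => simp [huz i]
    | inr l => simp [hv0 l]
  · intro hx
    rw [hx, Matrix.mulVec_zero]
end

section
/- Let R ∈ ℝ^{n×m} be the incidence matrix of a connected directed graph with n vertices and m links and no self-loops, let G ∈ ℝ^{n×n}, H ∈ ℝ^{m×m}, D ∈ ℝ^{m×m} be diagonal matrices with strictly positive diagonal entries, and A = [[0, −G⁻¹R], [H⁻¹Rᵀ, −H⁻¹D]]. Then for every integer k ≥ 1, Ker(Aᵏ) = {(c𝟙, 0) : c ∈ ℝ}; consequently the generalized eigenspace of A for the eigenvalue 0 is one-dimensional (0 is an eigenvalue of algebraic multiplicity one), spanned by (𝟙, 0). -/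
/-!
Write `x = (u, w)`. If `A x = 0` then `R w = 0` and `Rᵀ u = D w`, so
`wᵀ D w = (R w)ᵀ u = 0` forces `w = 0`; then `Rᵀ u = 0` says `u` takes equal values at the two
ends of every link, so `u` is constant on the connected graph. If `A² x = 0` then
`A x = c (𝟙, 0)`, whose first block is `-G⁻¹ R w`; pairing `G (c 𝟙) = -R w` with `𝟙` and using
`𝟙ᵀ R = 0` gives `c · 𝟙ᵀ G 𝟙 = 0`, so `c = 0`. Hence `Ker A² = Ker A`, and the kernels of all
higher powers agree with it.
-/

open Matrix

theorem SimpleGraph.Reachable.apply_eq_of_forall_adj {V α : Type*} {G : SimpleGraph V}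
    {f : V → α} (hf : ∀ a b, G.Adj a b → f a = f b) {a b : V} (hab : G.Reachable a b) :
    f a = f b := by
  obtain ⟨p⟩ := hab
  induction p with
  | nil => rfl
  | cons hadj _ ih => exact (hf _ _ hadj).trans ih

theorem Sum.elim_mem_span_elim_one_zero {ι κ K : Type*} [Semiring K] {u : ι → K} {w : κ → K} :
    Sum.elim u w ∈ Submodule.span K {Sum.elim (1 : ι → K) (0 : κ → K)} ↔
      u ∈ Submodule.span K {1} ∧ w = 0 := by
  have hsmul (c : K) : c • Sum.elim (1 : ι → K) (0 : κ → K) = Sum.elim (c • 1) (0 : κ → K) := by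
    ext (i | l) <;> simp
  simp only [Submodule.mem_span_singleton, hsmul, Sum.elim_eq_iff, exists_and_right, eq_comm]

theorem Matrix.inv_mulVec_eq_zero_iff {ι α : Type*} [Fintype ι] [DecidableEq ι] [CommRing α]
    {A : Matrix ι ι α} (hA : IsUnit A.det) {v : ι → α} :
    A⁻¹ *ᵥ v = 0 ↔ v = 0 := by
  refine ⟨fun hv => ?_, fun hv => by rw [hv, mulVec_zero]⟩
  simpa [mulVec_mulVec, mul_nonsing_inv _ hA] using congrArg (A *ᵥ ·) hv

theorem Matrix.isUnit_det_diagonal {ι K : Type*} [Fintype ι] [DecidableEq ι] [Field K]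
    {v : ι → K} (hv : ∀ i, v i ≠ 0) : IsUnit (diagonal v).det := by
  simpa [det_diagonal, Finset.prod_ne_zero_iff] using hv

theorem Matrix.ker_mulVecLin_pow_eq_of_ker_sq_le {ι K : Type*} [Field K] [Fintype ι]
    [DecidableEq ι] {A : Matrix ι ι K}
    (h : LinearMap.ker (A ^ 2).mulVecLin ≤ LinearMap.ker A.mulVecLin) {k : ℕ} (hk : 1 ≤ k) :
    LinearMap.ker (A ^ k).mulVecLin = LinearMap.ker A.mulVecLin := by
  simp_rw [← toLin'_apply', toLin'_pow] at h ⊢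
  obtain ⟨j, rfl⟩ := Nat.exists_eq_add_of_le hk
  rw [← Module.End.ker_pow_constant (k := 1) _ j, pow_one]
  exact le_antisymm (by rw [pow_one, sq]; exact LinearMap.ker_le_ker_comp _ _) (by simpa using h)

namespace IsIncidence

variable {n m : ℕ} {R : Matrix (Fin n) (Fin m) ℝ}

theorem transpose_mulVec_apply (hR : IsIncidence R) {j : Fin m} {a b : Fin n}
    (ha : R a j = 1) (hb : R b j = -1) (u : Fin n → ℝ) : (Rᵀ *ᵥ u) j = u a - u b := by
  obtain ⟨a', b', hne, ha', hb', hzero⟩ := hR j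
  have hsupp : ∀ i, R i j ≠ 0 → i = a' ∨ i = b' := fun i hi => by
    by_contra! h
    exact hi (hzero i h.1 h.2)
  obtain rfl : a = a' :=
    (hsupp a (by simp [ha])).resolve_right (by rintro rfl; norm_num [hb'] at ha)
  obtain rfl : b = b' :=
    (hsupp b (by simp [hb])).resolve_left (by rintro rfl; norm_num [ha'] at hb)
  rw [mulVec, dotProduct, Fintype.sum_eq_add a b hne fun i hi => by simp [hzero i hi.1 hi.2]]
  simp [ha, hb, sub_eq_add_neg]

theorem transpose_mulVec_one (hR : IsIncidence R) : Rᵀ *ᵥ 1 = 0 := by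
  funext j
  obtain ⟨a, b, -, ha, hb, -⟩ := hR j
  simp [hR.transpose_mulVec_apply ha hb]

theorem ker_transpose_eq_span_one (hR : IsIncidence R) (hconn : (IncidenceGraph R).Connected) :
    LinearMap.ker Rᵀ.mulVecLin = Submodule.span ℝ {1} := by
  refine le_antisymm (fun u hu => ?_) ((Submodule.span_singleton_le_iff_mem _ _).2 ?_)
  · rw [LinearMap.mem_ker, mulVecLin_apply] at hu
    have hadj : ∀ a b, (IncidenceGraph R).Adj a b → u a = u b := by
      rintro a b ⟨-, ⟨j, ha, hb⟩ | ⟨j, hb, ha⟩⟩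
      · simpa [sub_eq_zero, hu] using (hR.transpose_mulVec_apply ha hb u).symm
      · simpa [sub_eq_zero, hu, eq_comm] using (hR.transpose_mulVec_apply hb ha u).symm
    obtain ⟨v⟩ := hconn.nonempty
    refine Submodule.mem_span_singleton.2 ⟨u v, funext fun i => ?_⟩
    simpa using ((hconn v i).apply_eq_of_forall_adj hadj)
  · exact hR.transpose_mulVec_one

end IsIncidence

section Linearization

variable {ι κ : Type*} [Fintype ι] [Fintype κ]
  {R : Matrix ι κ ℝ} {G : Matrix ι ι ℝ} {H D : Matrix κ κ ℝ}

theorem eq_zero_of_mulVec_eq_zero_of_transpose_mulVec_eq (hD : D.PosDef) {u : ι → ℝ}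
    {w : κ → ℝ} (hw : R *ᵥ w = 0) (hu : Rᵀ *ᵥ u = D *ᵥ w) : w = 0 := by
  by_contra hne
  have hpos := hD.dotProduct_mulVec_pos hne
  rw [star_trivial, ← hu, dotProduct_mulVec, vecMul_transpose, hw, zero_dotProduct] at hpos
  exact hpos.false

variable [DecidableEq ι] [DecidableEq κ]

variable (R G H D) in
noncomputable def linearization : Matrix (ι ⊕ κ) (ι ⊕ κ) ℝ :=
  fromBlocks 0 (-(G⁻¹ * R)) (H⁻¹ * Rᵀ) (-(H⁻¹ * D))

theorem linearization_mulVec_elim (u : ι → ℝ) (w : κ → ℝ) :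
    linearization R G H D *ᵥ Sum.elim u w =
      Sum.elim (-(G⁻¹ *ᵥ R *ᵥ w)) (H⁻¹ *ᵥ (Rᵀ *ᵥ u - D *ᵥ w)) := by
  simp [linearization, fromBlocks_mulVec, ← mulVec_mulVec, neg_mulVec, mulVec_neg, mulVec_add,
    sub_eq_add_neg]

theorem linearization_mulVec_elim_eq_zero_iff (hG : IsUnit G.det) (hH : IsUnit H.det)
    {u : ι → ℝ} {w : κ → ℝ} :
    linearization R G H D *ᵥ Sum.elim u w = 0 ↔ R *ᵥ w = 0 ∧ Rᵀ *ᵥ u = D *ᵥ w := by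
  rw [linearization_mulVec_elim, ← Sum.elim_zero_zero, Sum.elim_eq_iff, neg_eq_zero,
    inv_mulVec_eq_zero_iff hG, inv_mulVec_eq_zero_iff hH, sub_eq_zero]

theorem ker_linearization (hG : IsUnit G.det) (hH : IsUnit H.det) (hD : D.PosDef)
    (hR : LinearMap.ker Rᵀ.mulVecLin = Submodule.span ℝ {1}) :
    LinearMap.ker (linearization R G H D).mulVecLin =
      Submodule.span ℝ {Sum.elim (1 : ι → ℝ) (0 : κ → ℝ)} := by
  ext x
  obtain ⟨u, w, rfl⟩ : ∃ u w, x = Sum.elim u w := ⟨_, _, (Sum.elim_comp_inl_inr x).symm⟩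
  rw [LinearMap.mem_ker, mulVecLin_apply, linearization_mulVec_elim_eq_zero_iff hG hH,
    Sum.elim_mem_span_elim_one_zero, ← hR, LinearMap.mem_ker, mulVecLin_apply]
  constructor
  · rintro ⟨hw, hu⟩
    obtain rfl := eq_zero_of_mulVec_eq_zero_of_transpose_mulVec_eq hD hw hu
    simpa using hu
  · rintro ⟨hu, rfl⟩
    simp [hu]

theorem ker_linearization_sq_le (hG : IsUnit G.det) (hH : IsUnit H.det) (hD : D.PosDef)
    (hR : LinearMap.ker Rᵀ.mulVecLin = Submodule.span ℝ {1}) (hG1 : 1 ⬝ᵥ G *ᵥ 1 ≠ 0) :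
    LinearMap.ker (linearization R G H D ^ 2).mulVecLin ≤
      LinearMap.ker (linearization R G H D).mulVecLin := by
  intro x hx
  obtain ⟨u, w, rfl⟩ : ∃ u w, x = Sum.elim u w := ⟨_, _, (Sum.elim_comp_inl_inr x).symm⟩
  rw [LinearMap.mem_ker, mulVecLin_apply, sq, ← mulVec_mulVec, ← mulVecLin_apply,
    ← LinearMap.mem_ker, ker_linearization hG hH hD hR, Submodule.mem_span_singleton] at hx
  obtain ⟨c, hc⟩ := hx
  have hR1 : Rᵀ *ᵥ 1 = 0 := LinearMap.mem_ker.1 (hR ▸ Submodule.mem_span_singleton_self 1)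
  have htop : c • 1 = -(G⁻¹ *ᵥ R *ᵥ w) := funext fun i => by
    simpa using congrFun (hc.trans (linearization_mulVec_elim u w)) (Sum.inl i)
  have hc0 : c * (1 ⬝ᵥ G *ᵥ 1) = 0 := calc
    c * (1 ⬝ᵥ G *ᵥ 1) = 1 ⬝ᵥ G *ᵥ (c • 1) := by rw [mulVec_smul, dotProduct_smul, smul_eq_mul]
    _ = -(1 ⬝ᵥ R *ᵥ w) := by
      rw [htop, mulVec_neg, mulVec_mulVec, mul_nonsing_inv _ hG, one_mulVec, dotProduct_neg]
    _ = 0 := by rw [dotProduct_mulVec, ← mulVec_transpose, hR1, zero_dotProduct, neg_zero]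
  obtain rfl : c = 0 := (mul_eq_zero.1 hc0).resolve_right hG1
  rw [LinearMap.mem_ker, mulVecLin_apply, ← hc, zero_smul]

end Linearization

/-- For every `k ≥ 1`, `Ker(Aᵏ) = {(c𝟙, 0) : c ∈ ℝ}`: the generalized
eigenspace of `A` for the eigenvalue `0` is one-dimensional, spanned by
`(𝟙, 0)`. -/
theorem ker_pow_eq_span_linearization {n m : ℕ} (R : Matrix (Fin n) (Fin m) ℝ)
    (hR : IsIncidence R) (hconn : (IncidenceGraph R).Connected)
    (g : Fin n → ℝ) (h : Fin m → ℝ) (d : Fin m → ℝ)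
    (hg : ∀ i, 0 < g i) (hh : ∀ l, 0 < h l) (hd : ∀ l, 0 < d l)
    (A : Matrix (Fin n ⊕ Fin m) (Fin n ⊕ Fin m) ℝ)
    (hA : A = Matrix.fromBlocks (0 : Matrix (Fin n) (Fin n) ℝ)
        (-((Matrix.diagonal g)⁻¹ * R))
        ((Matrix.diagonal h)⁻¹ * R.transpose)
        (-((Matrix.diagonal h)⁻¹ * Matrix.diagonal d))) :
    ∀ k : ℕ, 1 ≤ k →
      LinearMap.ker (A ^ k).mulVecLin
        = Submodule.span ℝ
            {(Sum.elim (fun _ => (1 : ℝ)) (fun _ => (0 : ℝ)) : Fin n ⊕ Fin m → ℝ)} := by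
  subst hA
  have hg1 : 1 ⬝ᵥ diagonal g *ᵥ 1 ≠ 0 := by
    obtain ⟨v⟩ := hconn.nonempty
    simpa [dotProduct, mulVec_diagonal] using
      (Finset.sum_pos (fun i _ => hg i) ⟨v, Finset.mem_univ v⟩).ne'
  have hG := isUnit_det_diagonal fun i => (hg i).ne'
  have hH := isUnit_det_diagonal fun l => (hh l).ne'
  have hD : (diagonal d).PosDef := posDef_diagonal_iff.2 hd
  have hker := hR.ker_transpose_eq_span_one hconn
  intro k hk
  exact (ker_mulVecLin_pow_eq_of_ker_sq_le (ker_linearization_sq_le hG hH hD hker hg1) hk).trans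
    (ker_linearization hG hH hD hker)
end
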